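/- Let d ∈ ℕ, 0 < s < 1 and 2 < p' < p < ∞, and let 𝕀^d = [−1/2,1/2]^d. Then there exists C > 0 such that for every measurable f : ℝ^d → ℝ with ‖f‖_{W^s_{p,G}(ℝ^d,γ)} < ∞ and every k ∈ ℤ^d, the shifted restriction g(x) := f(x + k) satisfies ‖g‖_{W^s_p(𝕀^d)} ≤ C e^{|k|²/p'} ‖f‖_{W^s_{p,G}(ℝ^d,γ)}, where |k| is the Euclidean norm of k. -/

import Mathlib

open MeasureTheory Real ENNReal

/-- The standard Gaussian measure on `ι → ℝ`, with density
`(2π)^{-card ι/2} exp(-|x|²/2)` with respect to Lebesgue measure. -/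
noncomputable def gaussianPi (ι : Type) [Fintype ι] : Measure (ι → ℝ) :=
  volume.withDensity fun x =>
    ENNReal.ofReal ((2 * Real.pi) ^ (-(Fintype.card ι : ℝ) / 2) *
      Real.exp (-(∑ i, x i ^ 2) / 2))

/-- The mixed difference `Δ^e_{y_e} f(x) = ∏_{j∈e} Δ_{y_j,j} f(x)`, written via
inclusion–exclusion: the coordinates of `x` in a subset `u ⊆ e` are replaced by
the corresponding coordinates of `y`. -/
noncomputable def mixedDiff {d : ℕ} (f : (Fin d → ℝ) → ℝ) (e : Finset (Fin d))
    (y : {j : Fin d // j ∈ e} → ℝ) (x : Fin d → ℝ) : ℝ :=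
  ∑ u : Finset {j : Fin d // j ∈ e}, (-1 : ℝ) ^ u.card *
    f (fun j => if hj : j ∈ e then (if ⟨j, hj⟩ ∈ u then y ⟨j, hj⟩ else x j) else x j)

/-- The Gagliardo-type double integral
`∫∫ |Δ^e_{y_e} f(x)|^p / ∏_{j∈e} |x_j − y_j|^{1+sp} dμ(x) dν(y_e)`. -/
noncomputable def gagliardoSemi {d : ℕ} (p s : ℝ) (f : (Fin d → ℝ) → ℝ)
    (e : Finset (Fin d)) (μ : Measure (Fin d → ℝ))
    (ν : Measure ({j : Fin d // j ∈ e} → ℝ)) : ℝ≥0∞ :=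
  ∫⁻ y, ∫⁻ x, ENNReal.ofReal (|mixedDiff f e y x| ^ p /
    ∏ j : {j : Fin d // j ∈ e}, |x j.1 - y j| ^ (1 + s * p)) ∂μ ∂ν

/-- The Gaussian Gagliardo norm
`‖f‖_{W^s_{p,G}(ℝ^d,γ)} = (∫|f|^p dγ)^{1/p} + Σ_{∅≠e} (∫∫ |Δ^e f|^p / ∏|x_j−y_j|^{1+sp} dγ dγ)^{1/p}`,
as a value in `[0,∞]`. -/
noncomputable def WnormG (d : ℕ) (p s : ℝ) (f : (Fin d → ℝ) → ℝ) : ℝ≥0∞ :=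
  (∫⁻ x, ENNReal.ofReal (|f x| ^ p) ∂gaussianPi (Fin d)) ^ (1 / p) +
    ∑ e ∈ Finset.univ.powerset.filter (fun e : Finset (Fin d) => e.Nonempty),
      (gagliardoSemi p s f e (gaussianPi (Fin d))
        (gaussianPi {j : Fin d // j ∈ e})) ^ (1 / p)

/-- The cube `[−1/2,1/2]^ι`. -/
def unitCube (ι : Type) : Set (ι → ℝ) :=
  Set.univ.pi fun _ => Set.Icc (-(1 : ℝ) / 2) (1 / 2)

/-- The fractional Sobolev norm on the cube `𝕀^d = [−1/2,1/2]^d`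
(with respect to Lebesgue measure),
`‖g‖_{W^s_p(𝕀^d)} = (∫_{𝕀^d}|g|^p)^{1/p} + Σ_{∅≠e} (∫_{𝕀^{|e|}}∫_{𝕀^d} |Δ^e g|^p / ∏|x_j−y_j|^{1+sp})^{1/p}`. -/
noncomputable def cubeNorm (d : ℕ) (p s : ℝ) (g : (Fin d → ℝ) → ℝ) : ℝ≥0∞ :=
  (∫⁻ x in unitCube (Fin d), ENNReal.ofReal (|g x| ^ p)) ^ (1 / p) +
    ∑ e ∈ Finset.univ.powerset.filter (fun e : Finset (Fin d) => e.Nonempty),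
      (gagliardoSemi p s g e (volume.restrict (unitCube (Fin d)))
        (volume.restrict (unitCube {j : Fin d // j ∈ e}))) ^ (1 / p)

/-! ### Auxiliary lemmas -/

/-- On the unit cube, a Lebesgue integral of a shifted function is controlled by the
corresponding Gaussian integral, provided `m` dominates the reciprocal of the Gaussian
density on the shifted cube. -/
lemma lint_cube_shift_le (ι : Type) [Fintype ι] (h : (ι → ℝ) → ℝ≥0∞) (κ : ι → ℝ) (m : ℝ)
    (hm0 : 0 ≤ m)
    (hm : ∀ x ∈ unitCube ι, 1 ≤ m * ((2 * Real.pi) ^ (-(Fintype.card ι : ℝ) / 2) *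
      Real.exp (-(∑ i, (x i + κ i) ^ 2) / 2))) :
    ∫⁻ x in unitCube ι, h (fun i => x i + κ i) ≤
      ENNReal.ofReal m * ∫⁻ x, h x ∂gaussianPi ι := by
  classical
  have hcube : MeasurableSet (unitCube ι) :=
    MeasurableSet.univ_pi fun _ => measurableSet_Icc
  set ρ : (ι → ℝ) → ℝ≥0∞ := fun x =>
    ENNReal.ofReal ((2 * Real.pi) ^ (-(Fintype.card ι : ℝ) / 2) *
      Real.exp (-(∑ i, x i ^ 2) / 2)) with hρdef
  have hρm : Measurable ρ := by
    apply Measurable.ennreal_ofReal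
    fun_prop
  set G : (ι → ℝ) → ℝ≥0∞ := fun x =>
    if (fun i => x i - κ i) ∈ unitCube ι then h x else 0 with hGdef
  have h1 : ∫⁻ x in unitCube ι, h (fun i => x i + κ i) = ∫⁻ x, G (x + κ) := by
    rw [← lintegral_indicator hcube]
    congr 1
    funext x
    have : (fun i => (x + κ) i - κ i) = x := by funext i; simp [add_sub_cancel_right]
    by_cases hx : x ∈ unitCube ι
    · simp only [hGdef, Set.indicator_of_mem hx, this, if_pos hx]
      rfl
    · simp [hGdef, Set.indicator_of_notMem hx, this, hx, Pi.add_apply]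
  have h2 : ∫⁻ x, G (x + κ) = ∫⁻ x, G x := lintegral_add_right_eq_self G κ
  have h3 : ∫⁻ x, G x ≤ ∫⁻ x, (ENNReal.ofReal m * ρ x) * h x := by
    apply lintegral_mono
    intro x
    by_cases hx : (fun i => x i - κ i) ∈ unitCube ι
    · simp only [hGdef, if_pos hx]
      have := hm _ hx
      simp only [sub_add_cancel] at this
      have h1m : (1 : ℝ≥0∞) ≤ ENNReal.ofReal m * ρ x := by
        rw [← ENNReal.ofReal_mul hm0, ← ENNReal.ofReal_one]
        exact ENNReal.ofReal_le_ofReal this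
      exact le_mul_of_one_le_left zero_le h1m
    · simp [hGdef, if_neg hx]
  have h4 : ∫⁻ x, (ENNReal.ofReal m * ρ x) * h x =
      ENNReal.ofReal m * ∫⁻ x, h x ∂gaussianPi ι := by
    rw [gaussianPi, ← hρdef,
      lintegral_withDensity_eq_lintegral_mul_non_measurable _ hρm
        (Filter.Eventually.of_forall fun x => ENNReal.ofReal_lt_top)]
    rw [← lintegral_const_mul' _ _ ENNReal.ofReal_ne_top]
    simp only [Pi.mul_apply, mul_assoc]
  rw [h1, h2, ← h4]
  exact h3

/-- The Gaussian density bound used to dominate the reciprocal density on shifted cubes. -/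
lemma density_bound (ι : Type) [Fintype ι] (d : ℕ) (hcard : Fintype.card ι ≤ d)
    (κ : ι → ℝ) (K δ : ℝ) (hδ : 0 < δ) (hK : ∑ i, κ i ^ 2 ≤ K) :
    ∀ x ∈ unitCube ι,
      1 ≤ Real.exp ((d / 2) * Real.log (2 * π) + ((1 + δ) * K + (1 + 1/δ) * (d / 4)) / 2) *
        ((2 * π) ^ (-(Fintype.card ι : ℝ) / 2) * Real.exp (-(∑ i, (x i + κ i) ^ 2) / 2)) := by
  intro x hx
  have h2π : (1 : ℝ) ≤ 2 * π := by nlinarith [Real.pi_gt_three]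
  have hL : 0 ≤ Real.log (2 * π) := Real.log_nonneg h2π
  have hxi : ∀ i, x i ^ 2 ≤ 1 / 4 := by
    intro i
    have := hx i (Set.mem_univ i)
    simp only [Set.mem_Icc] at this
    nlinarith [this.1, this.2]
  have hS : ∑ i, (x i + κ i) ^ 2 ≤ (1 + δ) * K + (1 + 1/δ) * (d / 4) := by
    have step : ∀ i ∈ Finset.univ, (x i + κ i) ^ 2 ≤ (1 + 1/δ) * x i ^ 2 + (1 + δ) * κ i ^ 2 := by
      intro i _
      have key : 0 ≤ 1/δ * (x i - δ * κ i) ^ 2 := by positivity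
      have expand : 1/δ * (x i - δ * κ i) ^ 2
          = 1/δ * x i ^ 2 - 2 * x i * κ i + δ * κ i ^ 2 := by
        field_simp
        ring
      rw [expand] at key
      nlinarith [key]
    calc ∑ i, (x i + κ i) ^ 2 ≤ ∑ i, ((1 + 1/δ) * x i ^ 2 + (1 + δ) * κ i ^ 2) :=
          Finset.sum_le_sum step
      _ = (1 + 1/δ) * ∑ i, x i ^ 2 + (1 + δ) * ∑ i, κ i ^ 2 := by
          rw [Finset.sum_add_distrib, Finset.mul_sum, Finset.mul_sum]
      _ ≤ (1 + 1/δ) * (d / 4) + (1 + δ) * K := by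
          have hsx : ∑ i, x i ^ 2 ≤ (Fintype.card ι : ℝ) / 4 := by
            calc ∑ i, x i ^ 2 ≤ ∑ _i : ι, (1/4 : ℝ) :=
                  Finset.sum_le_sum fun i _ => hxi i
              _ = (Fintype.card ι : ℝ) / 4 := by
                  simp [Finset.sum_const, Finset.card_univ]; ring
          have hcd : (Fintype.card ι : ℝ) ≤ d := Nat.cast_le.mpr hcard
          have h1δ : 0 ≤ 1 + 1/δ := by positivity
          have h1δ' : 0 ≤ 1 + δ := by linarith
          nlinarith
      _ = (1 + δ) * K + (1 + 1/δ) * (d / 4) := by ring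
  rw [show ((2 : ℝ) * π) ^ (-(Fintype.card ι : ℝ) / 2) =
      Real.exp (Real.log (2 * π) * (-(Fintype.card ι : ℝ) / 2)) from
      (Real.rpow_def_of_pos (by linarith) _),
    ← Real.exp_add, ← Real.exp_add]
  rw [Real.one_le_exp_iff]
  have hcd : (Fintype.card ι : ℝ) ≤ d := Nat.cast_le.mpr hcard
  have : 0 ≤ ((d : ℝ) - Fintype.card ι) * Real.log (2 * π) := by
    apply mul_nonneg (by linarith) hL
  nlinarith

/-- Shift identity for mixed differences. -/
lemma mixedDiff_shift {d : ℕ} (f : (Fin d → ℝ) → ℝ) (e : Finset (Fin d))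
    (κ : Fin d → ℝ) (y : {j : Fin d // j ∈ e} → ℝ) (x : Fin d → ℝ) :
    mixedDiff (fun z => f fun j => z j + κ j) e y x
      = mixedDiff f e (fun j => y j + κ j.1) (fun j => x j + κ j) := by
  unfold mixedDiff
  refine Finset.sum_congr rfl fun u _ => ?_
  congr 1
  beta_reduce
  congr 1
  funext j
  by_cases hj : j ∈ e
  · by_cases hu : (⟨j, hj⟩ : {j : Fin d // j ∈ e}) ∈ u <;> simp [hj, hu]
  · simp [hj]

/-- Generic `rpow` step for the term-by-term comparison. -/
lemma enn_term_le {r m c : ℝ} (hr : 0 ≤ r) (hm : 0 < m) (hmc : m ^ r ≤ c)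
    {I J : ℝ≥0∞} (hI : I ≤ ENNReal.ofReal m * J) :
    I ^ r ≤ ENNReal.ofReal c * J ^ r := by
  calc I ^ r ≤ (ENNReal.ofReal m * J) ^ r := ENNReal.rpow_le_rpow hI hr
    _ = (ENNReal.ofReal m) ^ r * J ^ r := ENNReal.mul_rpow_of_nonneg _ _ hr
    _ = ENNReal.ofReal (m ^ r) * J ^ r := by rw [ENNReal.ofReal_rpow_of_pos hm]
    _ ≤ ENNReal.ofReal c * J ^ r := mul_le_mul_left (ENNReal.ofReal_le_ofReal hmc) _

/-- Norm of the shifted restriction: for `2 < p' < p` there is `C > 0` such that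
for every `f` with finite Gaussian Gagliardo norm and every `k ∈ ℤ^d`,
`‖f(·+k)‖_{W^s_p(𝕀^d)} ≤ C e^{|k|²/p'} ‖f‖_{W^s_{p,G}(ℝ^d,γ)}`. -/
theorem shifted_restriction_norm_bound (d : ℕ) (hd : 0 < d) (p p' s : ℝ)
    (hs0 : 0 < s) (hs1 : s < 1) (hp'2 : 2 < p') (hp'p : p' < p) :
    ∃ C > (0 : ℝ), ∀ f : (Fin d → ℝ) → ℝ, Measurable f →
      WnormG d p s f ≠ ⊤ → ∀ k : Fin d → ℤ,
        cubeNorm d p s (fun x => f fun j => x j + (k j : ℝ)) ≤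
          ENNReal.ofReal (C * Real.exp ((∑ j, (k j : ℝ) ^ 2) / p')) *
            WnormG d p s f := by
  classical
  have hp'0 : 0 < p' := by linarith
  have hp0 : 0 < p := by linarith
  have hp1 : 1 ≤ p := by linarith
  set L : ℝ := Real.log (2 * π) with hLdef
  have hL : 0 ≤ L := Real.log_nonneg (by nlinarith [Real.pi_gt_three])
  set δ : ℝ := p / p' - 1 with hδdef
  have hδ : 0 < δ := by
    have h1 : 1 < p / p' := (one_lt_div hp'0).mpr hp'p
    rw [hδdef]
    linarith
  set B : ℝ := (1 + 1/δ) * (d / 4) with hBdef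
  have hB : 0 ≤ B := by positivity
  refine ⟨Real.exp ((d : ℝ) * L + B), Real.exp_pos _, fun f hf hW k => ?_⟩
  set K : ℝ := ∑ j, (k j : ℝ) ^ 2 with hKdef
  have hK0 : 0 ≤ K := Finset.sum_nonneg fun j _ => sq_nonneg _
  set a : ℝ := ((d : ℝ) / 2) * L + ((1 + δ) * K + B) / 2 with hadef
  have ha0 : 0 ≤ a := by positivity
  set m : ℝ := Real.exp a with hmdef
  have hm0 : (0:ℝ) < m := Real.exp_pos _
  set c : ℝ := Real.exp ((d : ℝ) * L + B) * Real.exp (K / p') with hcdef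
  -- the two real exponent inequalities
  have hmain : (a + a) * (1 / p) ≤ (d : ℝ) * L + B + K / p' := by
    have e1 : ((1 + δ) * K) / p = K / p' := by
      rw [hδdef]
      field_simp
      ring
    have e2 : ((d : ℝ) * L) / p ≤ (d : ℝ) * L := div_le_self (by positivity) hp1
    have e3 : B / p ≤ B := div_le_self hB hp1
    have expand : (a + a) * (1 / p) = ((d : ℝ) * L) / p + ((1 + δ) * K) / p + B / p := by
      rw [hadef]; ring
    rw [expand, e1]
    linarith
  have hb2 : (m * m) ^ (1 / p) ≤ c := by
    rw [hmdef, ← Real.exp_add, ← Real.exp_mul, hcdef, ← Real.exp_add]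
    exact Real.exp_le_exp.mpr hmain
  have hb1 : m ^ (1 / p) ≤ c := by
    have : a * (1 / p) ≤ (a + a) * (1 / p) := by
      apply mul_le_mul_of_nonneg_right (by linarith) (by positivity)
    rw [hmdef, ← Real.exp_mul, hcdef, ← Real.exp_add]
    exact Real.exp_le_exp.mpr (le_trans this hmain)
  -- density bounds
  have hmd : ∀ x ∈ unitCube (Fin d),
      1 ≤ m * ((2 * π) ^ (-(Fintype.card (Fin d) : ℝ) / 2) *
        Real.exp (-(∑ i, (x i + (k i : ℝ)) ^ 2) / 2)) := by
    intro x hx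
    have := density_bound (Fin d) d (by simp) (fun j => (k j : ℝ)) K δ hδ le_rfl x hx
    simpa [hmdef, hadef, hBdef, hLdef] using this
  have hr : 0 ≤ 1 / p := by positivity
  -- first term
  have h0 : (∫⁻ x in unitCube (Fin d),
        ENNReal.ofReal (|f fun j => x j + (k j : ℝ)| ^ p)) ^ (1 / p) ≤
      ENNReal.ofReal c *
        (∫⁻ x, ENNReal.ofReal (|f x| ^ p) ∂gaussianPi (Fin d)) ^ (1 / p) := by
    refine enn_term_le hr hm0 hb1 ?_
    exact lint_cube_shift_le (Fin d) (fun x => ENNReal.ofReal (|f x| ^ p))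
      (fun j => (k j : ℝ)) m hm0.le hmd
  -- gagliardo terms
  have hE : ∀ e ∈ Finset.univ.powerset.filter (fun e : Finset (Fin d) => e.Nonempty),
      (gagliardoSemi p s (fun x => f fun j => x j + (k j : ℝ)) e
          (volume.restrict (unitCube (Fin d)))
          (volume.restrict (unitCube {j : Fin d // j ∈ e}))) ^ (1 / p) ≤
        ENNReal.ofReal c *
          (gagliardoSemi p s f e (gaussianPi (Fin d))
            (gaussianPi {j : Fin d // j ∈ e})) ^ (1 / p) := by
    intro e _
    have hme : ∀ y ∈ unitCube {j : Fin d // j ∈ e},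
        1 ≤ m * ((2 * π) ^ (-(Fintype.card {j : Fin d // j ∈ e} : ℝ) / 2) *
          Real.exp (-(∑ i : {j : Fin d // j ∈ e}, (y i + (k i.1 : ℝ)) ^ 2) / 2)) := by
      intro y hy
      have hKe : ∑ i : {j : Fin d // j ∈ e}, ((k i.1 : ℝ)) ^ 2 ≤ K := by
        rw [hKdef]
        calc ∑ i : {j : Fin d // j ∈ e}, ((k i.1 : ℝ)) ^ 2
            = ∑ j ∈ e, (k j : ℝ) ^ 2 := Finset.sum_coe_sort e (fun j => ((k j : ℝ)) ^ 2)
          _ ≤ ∑ j, (k j : ℝ) ^ 2 :=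
              Finset.sum_le_sum_of_subset_of_nonneg (Finset.subset_univ e)
                (fun j _ _ => sq_nonneg _)
      have := density_bound {j : Fin d // j ∈ e} d
        (by simpa using Fintype.card_subtype_le (fun j : Fin d => j ∈ e))
        (fun i => (k i.1 : ℝ)) K δ hδ hKe y hy
      simpa [hmdef, hadef, hBdef, hLdef] using this
    -- main gagliardo bound
    have hgag : gagliardoSemi p s (fun x => f fun j => x j + (k j : ℝ)) e
          (volume.restrict (unitCube (Fin d)))
          (volume.restrict (unitCube {j : Fin d // j ∈ e})) ≤
        ENNReal.ofReal (m * m) *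
          gagliardoSemi p s f e (gaussianPi (Fin d)) (gaussianPi {j : Fin d // j ∈ e}) := by
      rw [ENNReal.ofReal_mul hm0.le, mul_assoc]
      set F : ({j : Fin d // j ∈ e} → ℝ) → (Fin d → ℝ) → ℝ≥0∞ := fun y x =>
        ENNReal.ofReal (|mixedDiff f e y x| ^ p /
          ∏ j : {j : Fin d // j ∈ e}, |x j.1 - y j| ^ (1 + s * p)) with hFdef
      have step1 : gagliardoSemi p s (fun x => f fun j => x j + (k j : ℝ)) e
            (volume.restrict (unitCube (Fin d)))
            (volume.restrict (unitCube {j : Fin d // j ∈ e}))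
          = ∫⁻ y in unitCube {j : Fin d // j ∈ e},
              ∫⁻ x in unitCube (Fin d),
                F (fun i => y i + (k i.1 : ℝ)) (fun i => x i + (k i : ℝ)) := by
        rw [gagliardoSemi]
        refine lintegral_congr fun y => lintegral_congr fun x => ?_
        rw [hFdef]
        simp only
        rw [mixedDiff_shift]
        congr 2
        refine Finset.prod_congr rfl fun j _ => ?_
        rw [add_sub_add_right_eq_sub]
      rw [step1]
      calc ∫⁻ y in unitCube {j : Fin d // j ∈ e},
              ∫⁻ x in unitCube (Fin d),
                F (fun i => y i + (k i.1 : ℝ)) (fun i => x i + (k i : ℝ))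
          ≤ ∫⁻ y in unitCube {j : Fin d // j ∈ e},
              ENNReal.ofReal m * ∫⁻ x, F (fun i => y i + (k i.1 : ℝ)) x
                ∂gaussianPi (Fin d) := by
            refine lintegral_mono fun y => ?_
            exact lint_cube_shift_le (Fin d) (F (fun i => y i + (k i.1 : ℝ)))
              (fun j => (k j : ℝ)) m hm0.le hmd
        _ = ENNReal.ofReal m * ∫⁻ y in unitCube {j : Fin d // j ∈ e},
              (fun y' => ∫⁻ x, F y' x ∂gaussianPi (Fin d)) (fun i => y i + (k i.1 : ℝ)) :=
            lintegral_const_mul' _ _ ENNReal.ofReal_ne_top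
        _ ≤ ENNReal.ofReal m * (ENNReal.ofReal m *
              ∫⁻ y, (fun y' => ∫⁻ x, F y' x ∂gaussianPi (Fin d)) y
                ∂gaussianPi {j : Fin d // j ∈ e}) := by
            refine mul_le_mul_right ?_ _
            exact lint_cube_shift_le {j : Fin d // j ∈ e}
              (fun y' => ∫⁻ x, F y' x ∂gaussianPi (Fin d))
              (fun i => (k i.1 : ℝ)) m hm0.le hme
        _ = ENNReal.ofReal m * (ENNReal.ofReal m *
              gagliardoSemi p s f e (gaussianPi (Fin d))
                (gaussianPi {j : Fin d // j ∈ e})) := rfl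
    exact enn_term_le hr (by positivity) hb2 hgag
  -- assemble
  rw [cubeNorm, WnormG]
  calc (∫⁻ x in unitCube (Fin d),
          ENNReal.ofReal (|(fun x => f fun j => x j + (k j : ℝ)) x| ^ p)) ^ (1 / p) +
        ∑ e ∈ Finset.univ.powerset.filter (fun e : Finset (Fin d) => e.Nonempty),
          (gagliardoSemi p s (fun x => f fun j => x j + (k j : ℝ)) e
            (volume.restrict (unitCube (Fin d)))
            (volume.restrict (unitCube {j : Fin d // j ∈ e}))) ^ (1 / p)
      ≤ ENNReal.ofReal c *
          (∫⁻ x, ENNReal.ofReal (|f x| ^ p) ∂gaussianPi (Fin d)) ^ (1 / p) +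
        ∑ e ∈ Finset.univ.powerset.filter (fun e : Finset (Fin d) => e.Nonempty),
          ENNReal.ofReal c *
            (gagliardoSemi p s f e (gaussianPi (Fin d))
              (gaussianPi {j : Fin d // j ∈ e})) ^ (1 / p) :=
        add_le_add h0 (Finset.sum_le_sum hE)
    _ = ENNReal.ofReal c *
          ((∫⁻ x, ENNReal.ofReal (|f x| ^ p) ∂gaussianPi (Fin d)) ^ (1 / p) +
            ∑ e ∈ Finset.univ.powerset.filter (fun e : Finset (Fin d) => e.Nonempty),
              (gagliardoSemi p s f e (gaussianPi (Fin d))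
                (gaussianPi {j : Fin d // j ∈ e})) ^ (1 / p)) := by
        rw [← Finset.mul_sum, mul_add]
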